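/- Let R be a commutative Noetherian ring and x_1, …, x_t a regular sequence in R whose generated ideal P = (x_1, …, x_t) is prime. Then for every m ≥ 0, the contraction along the localization map R → R_P of the ideal (P·R_P)^m equals P^m; that is, if g ∈ R has image g/1 ∈ (P·R_P)^m in the localization R_P of R at P, then g ∈ P^m. -/

import Mathlib

/-!
A regular sequence `x₁, …, x_t` generating `P` is quasi-regular: a form `F` of degree `k` with
`F(x) ∈ P ^ (k + 1)` has all its coefficients in `P`, i.e. `P ^ k / P ^ (k + 1)` is free over
`R / P` on the monomials of degree `k` (Matsumura, Thm. 16.2). This is proved by adjoining the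
`xᵢ` one at a time. If `P` is prime and `y ∉ P`, writing `g ∈ P ^ k` as `F(x)` and applying
quasi-regularity to `y • F` shows that `y g ∈ P ^ (k + 1)` forces `g ∈ P ^ (k + 1)`. Hence `P ^ m`
is `P`-primary, and a `P`-primary ideal is the contraction of its extension to `R_P`.
-/

/-- A list `xs = [x₁, …, xₙ]` of elements of a commutative ring `R` is a regular sequence if
each `xᵢ` is a nonzerodivisor modulo the ideal generated by its predecessors, and the ideal
`(x₁, …, xₙ)` is proper. -/
def IsRegularSeq {R : Type*} [CommRing R] (xs : List R) : Prop :=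
  (∀ (i : Fin xs.length) (f : R),
      xs.get i * f ∈ Ideal.span {a | a ∈ xs.take (i : ℕ)} →
        f ∈ Ideal.span {a | a ∈ xs.take (i : ℕ)}) ∧
    Ideal.span {a | a ∈ xs} ≠ ⊤

open MvPolynomial

section QuasiRegular

variable {R σ : Type*} [CommRing R]

theorem MvPolynomial.mem_supported_iff_forall_mem_support {s : Set σ} {F : MvPolynomial σ R} :
    F ∈ supported R s ↔ ∀ d ∈ F.support, ∀ i ∈ d.support, i ∈ s := by
  simp only [mem_supported, Set.subset_def, Finset.mem_coe, mem_vars_iff_mem_support]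
  grind

theorem MvPolynomial.exists_eq_X_mul_add {s : Set σ} {i : σ} {k : ℕ} {F : MvPolynomial σ R}
    (hFs : F ∈ supported R (insert i s)) (hFk : F.IsHomogeneous (k + 1)) :
    ∃ H G : MvPolynomial σ R, H ∈ supported R (insert i s) ∧ H.IsHomogeneous k ∧
      G ∈ supported R s ∧ G.IsHomogeneous (k + 1) ∧ F = X i * H + G := by
  classical
  rw [mem_supported_iff_forall_mem_support] at hFs
  have hcoeff_G (d) (hd : coeff d (F.modMonomial (Finsupp.single i 1)) ≠ 0) :
      coeff d F ≠ 0 ∧ d i = 0 := by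
    by_cases hle : Finsupp.single i 1 ≤ d
    · exact absurd (coeff_modMonomial_of_le F hle) hd
    · rw [coeff_modMonomial_of_not_le F hle] at hd
      rw [Finsupp.single_le_iff] at hle
      exact ⟨hd, by omega⟩
  refine ⟨F.divMonomial (Finsupp.single i 1), F.modMonomial (Finsupp.single i 1), ?_, ?_, ?_, ?_,
    (divMonomial_add_modMonomial F _).symm⟩
  · rw [mem_supported_iff_forall_mem_support]
    intro d hd j hj
    rw [mem_support_iff, coeff_divMonomial] at hd
    exact hFs _ (mem_support_iff.mpr hd) j (Finsupp.support_mono le_add_self hj)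
  · intro d hd
    rw [coeff_divMonomial] at hd
    have hdeg := hFk hd
    simp only [map_add, Finsupp.weight_single, Pi.one_apply, smul_eq_mul, mul_one] at hdeg
    omega
  · rw [mem_supported_iff_forall_mem_support]
    intro d hd j hj
    obtain ⟨hdF, hdi⟩ := hcoeff_G d (mem_support_iff.mp hd)
    refine (hFs d (mem_support_iff.mpr hdF) j hj).resolve_left ?_
    rintro rfl
    exact Finsupp.mem_support_iff.mp hj hdi
  · exact fun d hd => hFk (hcoeff_G d hd).1

theorem MvPolynomial.coeff_mem_of_isHomogeneous_zero (x : σ → R) {F : MvPolynomial σ R}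
    (hF : F.IsHomogeneous 0) {I : Ideal R} (h : eval x F ∈ I) (d : σ →₀ ℕ) : coeff d F ∈ I := by
  classical
  rw [← totalDegree_zero_iff_isHomogeneous, totalDegree_eq_zero_iff_eq_C] at hF
  rw [hF, eval_C] at h
  rw [hF, coeff_C]
  split_ifs
  exacts [h, zero_mem I]

variable (x : σ → R) {s : Set σ}

theorem MvPolynomial.eval_mem_mul_span_pow {k : ℕ} {F : MvPolynomial σ R}
    (hFs : F ∈ supported R s) (hFk : F.IsHomogeneous k) {J : Ideal R} (hJ : ∀ d, coeff d F ∈ J) :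
    eval x F ∈ J * Ideal.span (x '' s) ^ k := by
  rw [eval_eq]
  refine Ideal.sum_mem _ fun d hd => Ideal.mul_mem_mul (hJ d) ?_
  rw [hFk.degree_eq_sum_deg_support hd, ← Finset.prod_pow_eq_pow_sum]
  exact Ideal.prod_mem_prod fun i hi => Ideal.pow_mem_pow (Ideal.subset_span
    (Set.mem_image_of_mem x (mem_supported_iff_forall_mem_support.mp hFs d hd i hi))) _

theorem MvPolynomial.eval_mem_span_pow {k : ℕ} {F : MvPolynomial σ R} (hFs : F ∈ supported R s)
    (hFk : F.IsHomogeneous k) : eval x F ∈ Ideal.span (x '' s) ^ k := by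
  have h := eval_mem_mul_span_pow x hFs hFk (J := ⊤) fun _ => Submodule.mem_top
  rwa [Ideal.top_mul] at h

theorem MvPolynomial.exists_eval_eq_of_mem_span_pow {k : ℕ} {g : R}
    (hg : g ∈ Ideal.span (x '' s) ^ k) :
    ∃ F ∈ supported R s, F.IsHomogeneous k ∧ eval x F = g := by
  rw [Set.image_eq_range, Ideal.mem_span_pow_iff_exists_isHomogeneous] at hg
  obtain ⟨p, hp, rfl⟩ := hg
  refine ⟨rename (↑) p, ?_, hp.rename_isHomogeneous, ?_⟩
  · rw [supported_eq_range_rename]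
    exact AlgHom.mem_range_self _ p
  · rw [eval_rename]
    rfl

theorem Ideal.exists_eq_add_mul_of_mem_span_insert_pow {i : σ} {k : ℕ} {g : R}
    (hg : g ∈ Ideal.span (x '' insert i s) ^ (k + 1)) :
    ∃ u ∈ Ideal.span (x '' s) ^ (k + 1), ∃ v ∈ Ideal.span (x '' insert i s) ^ k,
      g = u + x i * v := by
  obtain ⟨F, hFs, hFk, rfl⟩ := exists_eval_eq_of_mem_span_pow x hg
  obtain ⟨H, G, hHs, hHk, hGs, hGk, rfl⟩ := exists_eq_X_mul_add hFs hFk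
  refine ⟨eval x G, eval_mem_span_pow x hGs hGk, eval x H, eval_mem_span_pow x hHs hHk, ?_⟩
  simp only [map_add, map_mul, eval_X]
  ring

/-- Quasi-regularity of the family `(x i)_{i ∈ s}` in the sense of Matsumura, §16. -/
def IsQuasiRegularOn (s : Set σ) : Prop :=
  ∀ (k : ℕ) (F : MvPolynomial σ R), F ∈ supported R s → F.IsHomogeneous k →
    eval x F ∈ Ideal.span (x '' s) ^ (k + 1) → ∀ d, coeff d F ∈ Ideal.span (x '' s)

theorem isQuasiRegularOn_empty : IsQuasiRegularOn x ∅ := by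
  intro k F hFs _ hF d
  rw [supported_empty, Algebra.mem_bot] at hFs
  obtain ⟨c, rfl⟩ := hFs
  simp_all

namespace IsQuasiRegularOn

variable {x}

theorem mem_pow_of_mul_mem_pow (hq : IsQuasiRegularOn x s) {y : R}
    (hy : ∀ f, y * f ∈ Ideal.span (x '' s) → f ∈ Ideal.span (x '' s)) {w : R} {k : ℕ}
    (h : y * w ∈ Ideal.span (x '' s) ^ k) : w ∈ Ideal.span (x '' s) ^ k := by
  induction k with
  | zero => simp
  | succ k ih =>
    obtain ⟨F, hFs, hFk, rfl⟩ :=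
      exists_eval_eq_of_mem_span_pow x (ih (Ideal.pow_le_pow_right k.le_succ h))
    have hcoeff (d : σ →₀ ℕ) : coeff d F ∈ Ideal.span (x '' s) := by
      refine hy _ ?_
      rw [← coeff_C_mul]
      exact hq k _ (Subalgebra.mul_mem _ (Subalgebra.algebraMap_mem _ y) hFs) (hFk.C_mul y)
        (by simpa using h) d
    rw [pow_succ']
    exact eval_mem_mul_span_pow x hFs hFk hcoeff

theorem insert (hq : IsQuasiRegularOn x s) {i : σ}
    (hi : ∀ f, x i * f ∈ Ideal.span (x '' s) → f ∈ Ideal.span (x '' s)) :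
    IsQuasiRegularOn x (insert i s) := by
  set I := Ideal.span (x '' s)
  set J := Ideal.span (x '' Insert.insert i s)
  have hIJ : I ≤ J := Ideal.span_mono (Set.image_mono (Set.subset_insert i s))
  have hxi : x i ∈ J := Ideal.subset_span (Set.mem_image_of_mem x (Set.mem_insert i s))
  intro k
  induction k with
  | zero => exact fun F _ hF h => coeff_mem_of_isHomogeneous_zero x hF (by simpa using h)
  | succ k ih =>
    intro F hFs hFk hF
    -- `F = X i * H + G` with `G` free of `X i`, and `F(x) = u + x i * v` with `u ∈ I ^ (k + 2)`.
    -- Then `v - H(x)` is the value `K(x)` of a form in the old variables: the induction on the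
    -- degree applies to `H`, and quasi-regularity on `s` to `G - x i • K`.
    obtain ⟨H, G, hHs, hHk, hGs, hGk, rfl⟩ := exists_eq_X_mul_add hFs hFk
    obtain ⟨u, hu, v, hv, huv⟩ := Ideal.exists_eq_add_mul_of_mem_span_insert_pow x hF
    have hGv : x i * (v - eval x H) = eval x G - u := by
      simp only [map_add, map_mul, eval_X] at huv
      linear_combination -huv
    obtain ⟨K, hKs, hKk, hK⟩ := exists_eval_eq_of_mem_span_pow x
      (hq.mem_pow_of_mul_mem_pow hi (hGv ▸ sub_mem (eval_mem_span_pow x hGs hGk)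
        (Ideal.pow_le_pow_right (k + 1).le_succ hu)))
    have hH : ∀ d, coeff d H ∈ J := by
      refine ih H hHs hHk ?_
      rw [show eval x H = v - eval x K by rw [hK]; ring]
      exact sub_mem hv (Ideal.pow_right_mono hIJ _ (eval_mem_span_pow x hKs hKk))
    have hGK : ∀ d, coeff d (G - C (x i) * K) ∈ I := by
      refine hq (k + 1) _ (sub_mem hGs (mul_mem (Subalgebra.algebraMap_mem _ _) hKs))
        (hGk.sub (hKk.C_mul _)) ?_
      rwa [show eval x (G - C (x i) * K) = u by
        simp only [map_sub, map_mul, eval_C, hK]; linear_combination -hGv]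
    intro d
    rw [show coeff d (X i * H + G) =
        coeff d (X i * H) + coeff d (G - C (x i) * K) + x i * coeff d K by
      simp only [coeff_add, coeff_sub, coeff_C_mul]; ring]
    refine add_mem (add_mem ?_ (hIJ (hGK d))) (Ideal.mul_mem_right _ _ hxi)
    classical
    rw [coeff_X_mul']
    split_ifs
    exacts [hH _, zero_mem _]

theorem isPrimary_pow (hq : IsQuasiRegularOn x s) (hP : (Ideal.span (x '' s)).IsPrime) {m : ℕ}
    (hm : m ≠ 0) : (Ideal.span (x '' s) ^ m).IsPrimary := by
  rw [Ideal.isPrimary_iff, Ideal.radical_pow _ hm, hP.radical]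
  refine ⟨ne_top_of_le_ne_top hP.ne_top (Ideal.pow_le_self hm), fun {a b} hab => ?_⟩
  by_cases hb : b ∈ Ideal.span (x '' s)
  · exact Or.inr hb
  · rw [mul_comm] at hab
    exact Or.inl (hq.mem_pow_of_mul_mem_pow (fun f hf => (hP.mem_or_mem hf).resolve_left hb) hab)

end IsQuasiRegularOn

theorem IsRegularSeq.isQuasiRegularOn {xs : List R} (hxs : IsRegularSeq xs) :
    IsQuasiRegularOn id {a | a ∈ xs} := by
  suffices ∀ n, IsQuasiRegularOn id {a | a ∈ xs.take n} by simpa using this xs.length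
  intro n
  induction n with
  | zero => simpa using isQuasiRegularOn_empty id
  | succ n ih =>
    rw [List.take_add_one]
    rcases lt_or_ge n xs.length with hn | hn
    · have hset : {a | a ∈ xs.take n ++ xs[n]?.toList} = insert xs[n] {a | a ∈ xs.take n} := by
        ext a
        simp only [Set.mem_ofPred_eq, Set.mem_insert_iff, List.mem_append,
          List.getElem?_eq_getElem hn, Option.toList_some, List.mem_singleton, or_comm]
      rw [hset]
      exact ih.insert (by simpa using hxs.1 ⟨n, hn⟩)
    · simpa [List.getElem?_eq_none hn] using ih

end QuasiRegular

theorem comap_localization_prime_pow_eq_general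
    {R : Type*} [CommRing R] (xs : List R)
    (hreg : IsRegularSeq xs)
    (P : Ideal R) (hP : P = Ideal.span {a | a ∈ xs}) [hprime : P.IsPrime]
    (m : ℕ) :
    Ideal.comap (algebraMap R (Localization.AtPrime P))
        ((P.map (algebraMap R (Localization.AtPrime P))) ^ m) = P ^ m := by
  rcases eq_or_ne m 0 with rfl | hm
  · simp
  have hprimary : (P ^ m).IsPrimary := by
    subst hP
    simpa using hreg.isQuasiRegularOn.isPrimary_pow (by simpa using hprime) hm
  rw [← Ideal.map_pow]
  exact IsLocalization.under_map_of_isPrimary_disjoint P.primeCompl _ hprimary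
    (Set.disjoint_left.mpr fun _ ha h => ha (Ideal.pow_le_self hm h))

/-- Let `R` be Noetherian and `x₁, …, x_t` a regular sequence whose generated
ideal `P` is prime. Then for every `m`, the contraction along `R → R_P` of `(P·R_P) ^ m`
equals `P ^ m`. -/
theorem comap_localization_prime_pow_eq
    {R : Type*} [CommRing R] [IsNoetherianRing R] (xs : List R)
    (hreg : IsRegularSeq xs)
    (P : Ideal R) (hP : P = Ideal.span {a | a ∈ xs}) [hprime : P.IsPrime]
    (m : ℕ) :
    Ideal.comap (algebraMap R (Localization.AtPrime P))
        ((P.map (algebraMap R (Localization.AtPrime P))) ^ m) = P ^ m :=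
  comap_localization_prime_pow_eq_general xs hreg P hP (hprime := hprime) m
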